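/- arXiv:1505.05118 — 4 statements merged into one kernel-verified Lean document; each statement's English description precedes it below -/
import Mathlib

section
/- Let H be a real Hilbert space, α > 0, and let (W_n) be a sequence of bounded self-adjoint operators on H with ⟨W_n x, x⟩ ≥ α‖x‖² for all x and μ := sup_n ‖W_n‖ < ∞. Let (x_n) be a sequence in H, let (c_k) be a sequence in H converging strongly to x_0 ∈ H, and suppose that for each k the sequence (‖x_n − c_k‖_{W_n})_{n} converges to some τ_k ∈ [0,∞) as n → ∞. Then (‖x_n − x_0‖_{W_n})_{n} converges, and its limit equals lim_{k→∞} τ_k. -/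
open Filter Topology
open scoped RealInnerProductSpace

noncomputable section

variable {E : Type*} [NormedAddCommGroup E] [InnerProductSpace ℝ E]

def wnorm (W : E →L[ℝ] E) (x : E) : ℝ := Real.sqrt ⟪W x, x⟫

section aux
variable {W : E →L[ℝ] E}
  (hsymm : ∀ u w : E, ⟪W u, w⟫ = ⟪u, W w⟫)
  (hpos : ∀ u : E, (0:ℝ) ≤ ⟪W u, u⟫)

lemma wnorm_nonneg (x : E) : 0 ≤ wnorm W x := Real.sqrt_nonneg _

lemma wnorm_sq (hpos : ∀ u : E, (0:ℝ) ≤ ⟪W u, u⟫) (x : E) :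
    wnorm W x ^ 2 = ⟪W x, x⟫ := Real.sq_sqrt (hpos x)

include hsymm hpos in
lemma wnorm_cs (u v : E) : ⟪W u, v⟫ ≤ wnorm W u * wnorm W v := by
  have hdisc : discrim ⟪W v, v⟫ (2 * ⟪W u, v⟫) ⟪W u, u⟫ ≤ 0 := by
    apply discrim_le_zero
    intro t
    have h := hpos (u + t • v)
    have hexp : ⟪W (u + t • v), u + t • v⟫
        = ⟪W v, v⟫ * t ^ 2 + 2 * ⟪W u, v⟫ * t + ⟪W u, u⟫ := by
      simp only [map_add, map_smul, inner_add_add_self, inner_add_left,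
        inner_add_right, inner_smul_left, inner_smul_right, real_inner_smul_left,
        real_inner_smul_right, conj_trivial]
      have : ⟪W v, u⟫ = ⟪W u, v⟫ := by
        rw [hsymm v u, real_inner_comm]
      rw [this]; ring
    linarith [hexp ▸ h]
  have h4 : (2 * ⟪W u, v⟫) ^ 2 ≤ 4 * (⟪W u, u⟫ * ⟪W v, v⟫) := by
    have := hdisc; unfold discrim at this; nlinarith
  have hsq : ⟪W u, v⟫ ^ 2 ≤ ⟪W u, u⟫ * ⟪W v, v⟫ := by nlinarith
  calc ⟪W u, v⟫ ≤ |⟪W u, v⟫| := le_abs_self _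
    _ = Real.sqrt (⟪W u, v⟫ ^ 2) := (Real.sqrt_sq_eq_abs _).symm
    _ ≤ Real.sqrt (⟪W u, u⟫ * ⟪W v, v⟫) := Real.sqrt_le_sqrt hsq
    _ = wnorm W u * wnorm W v := Real.sqrt_mul (hpos u) _

include hsymm hpos in
lemma wnorm_triangle (u v : E) : wnorm W (u + v) ≤ wnorm W u + wnorm W v := by
  have key : ⟪W (u + v), u + v⟫ ≤ (wnorm W u + wnorm W v) ^ 2 := by
    have hexp : ⟪W (u + v), u + v⟫ = ⟪W u, u⟫ + 2 * ⟪W u, v⟫ + ⟪W v, v⟫ := by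
      simp only [map_add, inner_add_left, inner_add_right]
      have : ⟪W v, u⟫ = ⟪W u, v⟫ := by rw [hsymm v u, real_inner_comm]
      rw [this]; ring
    have hcs := wnorm_cs hsymm hpos u v
    have h1 := wnorm_sq hpos u
    have h2 := wnorm_sq hpos v
    nlinarith
  calc wnorm W (u + v) = Real.sqrt ⟪W (u + v), u + v⟫ := rfl
    _ ≤ Real.sqrt ((wnorm W u + wnorm W v) ^ 2) := Real.sqrt_le_sqrt key
    _ = |wnorm W u + wnorm W v| := Real.sqrt_sq_eq_abs _
    _ = wnorm W u + wnorm W v := abs_of_nonneg (add_nonneg (wnorm_nonneg u) (wnorm_nonneg v))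

include hsymm hpos in
lemma wnorm_abs_sub (u v : E) : |wnorm W u - wnorm W v| ≤ wnorm W (u - v) := by
  have h1 : wnorm W u ≤ wnorm W (u - v) + wnorm W v := by
    have := wnorm_triangle hsymm hpos (u - v) v
    simpa using this
  have h2 : wnorm W v ≤ wnorm W (u - v) + wnorm W u := by
    have := wnorm_triangle hsymm hpos (v - u) u
    have hneg : wnorm W (v - u) = wnorm W (u - v) := by
      unfold wnorm
      rw [show v - u = -(u - v) by abel, map_neg, inner_neg_neg]
    simpa [hneg] using this
  rw [abs_sub_le_iff]; constructor <;> linarith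

lemma wnorm_le_sqrt_mul {μ : ℝ} (hW : ‖W‖ ≤ μ) (u : E) :
    wnorm W u ≤ Real.sqrt μ * ‖u‖ := by
  have h : ⟪W u, u⟫ ≤ μ * ‖u‖ ^ 2 := by
    calc ⟪W u, u⟫ ≤ ‖W u‖ * ‖u‖ := real_inner_le_norm _ _
      _ ≤ (‖W‖ * ‖u‖) * ‖u‖ := by gcongr; exact W.le_opNorm u
      _ ≤ μ * ‖u‖ ^ 2 := by nlinarith [norm_nonneg u, norm_nonneg (W u)]
  have hμ : 0 ≤ μ := le_trans (norm_nonneg W) hW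
  calc wnorm W u ≤ Real.sqrt (μ * ‖u‖ ^ 2) := Real.sqrt_le_sqrt h
    _ = Real.sqrt μ * ‖u‖ := by
        rw [Real.sqrt_mul hμ, Real.sqrt_sq (norm_nonneg u)]

end aux
/-- If `c_k → x₀` strongly and, for each `k`,
`‖x_n − c_k‖_{W_n} → τ_k` as `n → ∞`, then `(‖x_n − x₀‖_{W_n})` converges and its limit
is `lim_k τ_k`. -/
theorem wnorm_dist_limit_of_approx
    {H : Type*} [NormedAddCommGroup H] [InnerProductSpace ℝ H]
    (α μ : ℝ) (hα : 0 < α)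
    (W : ℕ → H →L[ℝ] H)
    (hWsa : ∀ n, ∀ u w : H, ⟪W n u, w⟫ = ⟪u, W n w⟫)
    (hWcoer : ∀ n, ∀ u : H, α * ‖u‖ ^ 2 ≤ ⟪W n u, u⟫)
    (hWbdd : ∀ n, ‖W n‖ ≤ μ)
    (x : ℕ → H) (c : ℕ → H) (x0 : H)
    (hc : Tendsto c atTop (𝓝 x0))
    (τ : ℕ → ℝ)
    (hτ : ∀ k, Tendsto (fun n => wnorm (W n) (x n - c k)) atTop (𝓝 (τ k))) :
    ∃ l : ℝ, Tendsto τ atTop (𝓝 l) ∧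
      Tendsto (fun n => wnorm (W n) (x n - x0)) atTop (𝓝 l) := by
  have hμ0 : 0 ≤ μ := le_trans (norm_nonneg (W 0)) (hWbdd 0)
  have hpos : ∀ n, ∀ u : H, (0:ℝ) ≤ ⟪W n u, u⟫ := fun n u =>
    le_trans (by positivity) (hWcoer n u)
  -- Step 1: |τ k - τ j| ≤ √μ ‖c k - c j‖
  have step1 : ∀ k j, |τ k - τ j| ≤ Real.sqrt μ * ‖c k - c j‖ := by
    intro k j
    have hlim : Tendsto
        (fun n => |wnorm (W n) (x n - c k) - wnorm (W n) (x n - c j)|)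
        atTop (𝓝 |τ k - τ j|) := ((hτ k).sub (hτ j)).abs
    refine le_of_tendsto hlim (Eventually.of_forall fun n => ?_)
    calc |wnorm (W n) (x n - c k) - wnorm (W n) (x n - c j)|
        ≤ wnorm (W n) ((x n - c k) - (x n - c j)) :=
          wnorm_abs_sub (hWsa n) (hpos n) _ _
      _ = wnorm (W n) (c j - c k) := by
          rw [show (x n - c k) - (x n - c j) = c j - c k by abel]
      _ ≤ Real.sqrt μ * ‖c j - c k‖ := wnorm_le_sqrt_mul (hWbdd n) _
      _ = Real.sqrt μ * ‖c k - c j‖ := by rw [norm_sub_rev]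
  -- Step 2: τ is Cauchy, hence converges to some l
  have hcauchy : CauchySeq τ := by
    rw [Metric.cauchySeq_iff]
    intro ε hε
    have hε' : 0 < ε / (Real.sqrt μ + 1) := by positivity
    obtain ⟨N, hN⟩ := Metric.cauchySeq_iff.mp hc.cauchySeq _ hε'
    refine ⟨N, fun k hk j hj => ?_⟩
    have h1 : dist (τ k) (τ j) ≤ Real.sqrt μ * ‖c k - c j‖ := by
      rw [Real.dist_eq]; exact step1 k j
    have h2 : ‖c k - c j‖ < ε / (Real.sqrt μ + 1) := by
      rw [← dist_eq_norm]; exact hN k hk j hj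
    have hs : (0:ℝ) ≤ Real.sqrt μ := Real.sqrt_nonneg _
    calc dist (τ k) (τ j) ≤ Real.sqrt μ * ‖c k - c j‖ := h1
      _ ≤ (Real.sqrt μ + 1) * ‖c k - c j‖ := by nlinarith [norm_nonneg (c k - c j)]
      _ < (Real.sqrt μ + 1) * (ε / (Real.sqrt μ + 1)) := by
          apply mul_lt_mul_of_pos_left h2; positivity
      _ = ε := by field_simp
  obtain ⟨l, hl⟩ := cauchySeq_tendsto_of_complete hcauchy
  refine ⟨l, hl, ?_⟩
  -- Step 3: wnorm (W n) (x n - x0) → l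
  rw [Metric.tendsto_atTop]
  intro ε hε
  have hck : Tendsto (fun k => Real.sqrt μ * ‖c k - x0‖) atTop (𝓝 0) := by
    have := (tendsto_iff_norm_sub_tendsto_zero.mp hc).const_mul (Real.sqrt μ)
    simpa using this
  have hev : ∀ᶠ k in atTop,
      Real.sqrt μ * ‖c k - x0‖ < ε / 3 ∧ |τ k - l| < ε / 3 := by
    filter_upwards [hck.eventually (gt_mem_nhds (by positivity : (0:ℝ) < ε / 3)),
      (hl.eventually (Metric.ball_mem_nhds l (by positivity : (0:ℝ) < ε / 3)))]
      with k h1 h2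
    exact ⟨h1, by rwa [Real.dist_eq] at h2⟩
  obtain ⟨k, hk1, hk2⟩ := hev.exists
  obtain ⟨N, hN⟩ := Metric.tendsto_atTop.mp (hτ k) (ε / 3) (by positivity)
  refine ⟨N, fun n hn => ?_⟩
  have h3 : |wnorm (W n) (x n - x0) - wnorm (W n) (x n - c k)|
      ≤ Real.sqrt μ * ‖c k - x0‖ := by
    calc |wnorm (W n) (x n - x0) - wnorm (W n) (x n - c k)|
        ≤ wnorm (W n) ((x n - x0) - (x n - c k)) :=
          wnorm_abs_sub (hWsa n) (hpos n) _ _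
      _ = wnorm (W n) (c k - x0) := by
          rw [show (x n - x0) - (x n - c k) = c k - x0 by abel]
      _ ≤ Real.sqrt μ * ‖c k - x0‖ := wnorm_le_sqrt_mul (hWbdd n) _
  have h4 : |wnorm (W n) (x n - c k) - τ k| < ε / 3 := by
    have := hN n hn; rwa [Real.dist_eq] at this
  rw [Real.dist_eq]
  calc |wnorm (W n) (x n - x0) - l|
      ≤ |wnorm (W n) (x n - x0) - wnorm (W n) (x n - c k)|
        + |wnorm (W n) (x n - c k) - τ k| + |τ k - l| := by
        have := abs_sub_le (wnorm (W n) (x n - x0)) (wnorm (W n) (x n - c k)) (τ k)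
        have := abs_sub_le (wnorm (W n) (x n - x0)) (τ k) l
        linarith [abs_sub_le (wnorm (W n) (x n - x0)) (wnorm (W n) (x n - c k)) (τ k),
          abs_sub_le (wnorm (W n) (x n - x0)) (τ k) l]
    _ < ε / 3 + ε / 3 + ε / 3 := by linarith
    _ = ε := by ring
end
end

section
/- Let H be a real Hilbert space, α > 0, W a bounded self-adjoint operator with ⟨Wx,x⟩ ≥ α‖x‖² for all x, and (W_n) a sequence of bounded self-adjoint operators with ⟨W_n x,x⟩ ≥ α‖x‖² for all x, such that W_n z → Wz for every z ∈ H. Let (x_n) be a sequence in H and let x, y ∈ H be such that: (‖x_n − x‖_{W_n})_n and (‖x_n − y‖_{W_n})_n both converge; some subsequence of (x_n) converges weakly to x; and some subsequence of (x_n) converges weakly to y. Then x = y. -/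
open Filter Topology
open scoped RealInnerProductSpace

noncomputable section

variable {E : Type*} [NormedAddCommGroup E] [InnerProductSpace ℝ E]

/-- Weak convergence of a sequence in a Hilbert space. -/
def WeakLim (u : ℕ → E) (l : E) : Prop :=
  ∀ w : E, Tendsto (fun n => ⟪u n, w⟫) atTop (𝓝 ⟪l, w⟫)

/-- Variable-metric Opial-type uniqueness: if `(‖x_n − x‖_{W_n})` and
`(‖x_n − y‖_{W_n})` both converge, and `x` and `y` are weak limits of subsequences of
`(x_n)`, then `x = y`. -/
theorem variable_metric_opial_uniqueness
    {H : Type*} [NormedAddCommGroup H] [InnerProductSpace ℝ H]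
    (α : ℝ) (hα : 0 < α)
    (W : H →L[ℝ] H) (hWsa : ∀ u w : H, ⟪W u, w⟫ = ⟪u, W w⟫)
    (hWcoer : ∀ u : H, α * ‖u‖ ^ 2 ≤ ⟪W u, u⟫)
    (Wn : ℕ → H →L[ℝ] H) (hWnsa : ∀ n, ∀ u w : H, ⟪Wn n u, w⟫ = ⟪u, Wn n w⟫)
    (hWncoer : ∀ n, ∀ u : H, α * ‖u‖ ^ 2 ≤ ⟪Wn n u, u⟫)
    (hWconv : ∀ u : H, Tendsto (fun n => Wn n u) atTop (𝓝 (W u)))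
    (x : ℕ → H) (p q : H)
    (hp : ∃ l : ℝ, Tendsto (fun n => wnorm (Wn n) (x n - p)) atTop (𝓝 l))
    (hq : ∃ l : ℝ, Tendsto (fun n => wnorm (Wn n) (x n - q)) atTop (𝓝 l))
    (hpw : ∃ s : ℕ → ℕ, StrictMono s ∧ WeakLim (fun k => x (s k)) p)
    (hqw : ∃ s : ℕ → ℕ, StrictMono s ∧ WeakLim (fun k => x (s k)) q) :
    p = q := by
  obtain ⟨a, ha⟩ := hp
  obtain ⟨b, hb⟩ := hq
  -- nonnegativity of the quadratic forms
  have hnn : ∀ n : ℕ, ∀ u : H, (0:ℝ) ≤ ⟪Wn n u, u⟫ := fun n u =>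
    le_trans (by positivity) (hWncoer n u)
  -- squared wnorms converge
  have hsqp : Tendsto (fun n => ⟪Wn n (x n - p), x n - p⟫) atTop (𝓝 (a ^ 2)) := by
    have h := (ha.mul ha).congr
      (f₂ := fun n => ⟪Wn n (x n - p), x n - p⟫)
      (fun n => by rw [wnorm]; exact Real.mul_self_sqrt (hnn n (x n - p)))
    simpa [sq] using h
  have hsqq : Tendsto (fun n => ⟪Wn n (x n - q), x n - q⟫) atTop (𝓝 (b ^ 2)) := by
    have h := (hb.mul hb).congr
      (f₂ := fun n => ⟪Wn n (x n - q), x n - q⟫)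
      (fun n => by rw [wnorm]; exact Real.mul_self_sqrt (hnn n (x n - q)))
    simpa [sq] using h
  -- boundedness of x n
  obtain ⟨C, hC⟩ := hsqp.bddAbove_range
  have hxbd : ∀ n, ‖x n‖ ≤ Real.sqrt (C / α) + ‖p‖ := by
    intro n
    have h1 : α * ‖x n - p‖ ^ 2 ≤ C :=
      le_trans (hWncoer n _) (hC (Set.mem_range_self n))
    have h2 : ‖x n - p‖ ^ 2 ≤ C / α := by
      rw [le_div_iff₀ hα]; linarith
    have h3 : ‖x n - p‖ ≤ Real.sqrt (C / α) := by
      have := Real.sqrt_le_sqrt h2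
      rwa [Real.sqrt_sq (norm_nonneg _)] at this
    calc ‖x n‖ = ‖(x n - p) + p‖ := by rw [sub_add_cancel]
      _ ≤ ‖x n - p‖ + ‖p‖ := norm_add_le _ _
      _ ≤ Real.sqrt (C / α) + ‖p‖ := by linarith
  set M := Real.sqrt (C / α) + ‖p‖ with hM
  -- pointwise identity
  have hid : ∀ n, ⟪x n, Wn n q - Wn n p⟫ =
      (⟪Wn n (x n - p), x n - p⟫ - ⟪Wn n (x n - q), x n - q⟫
        + ⟪Wn n q, q⟫ - ⟪Wn n p, p⟫) / 2 := by
    intro n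
    have e1 : ⟪Wn n p, x n⟫ = ⟪x n, Wn n p⟫ := real_inner_comm _ _
    have e2 : ⟪Wn n q, x n⟫ = ⟪x n, Wn n q⟫ := real_inner_comm _ _
    have e3 : ⟪Wn n (x n), p⟫ = ⟪x n, Wn n p⟫ := hWnsa n _ _
    have e4 : ⟪Wn n (x n), q⟫ = ⟪x n, Wn n q⟫ := hWnsa n _ _
    simp only [map_sub, inner_sub_left, inner_sub_right] at *
    linarith
  -- convergence of the constant parts
  have hWpp : Tendsto (fun n => ⟪Wn n p, p⟫) atTop (𝓝 ⟪W p, p⟫) :=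
    (hWconv p).inner tendsto_const_nhds
  have hWqq : Tendsto (fun n => ⟪Wn n q, q⟫) atTop (𝓝 ⟪W q, q⟫) :=
    (hWconv q).inner tendsto_const_nhds
  set c : ℝ := (a ^ 2 - b ^ 2 + ⟪W q, q⟫ - ⟪W p, p⟫) / 2 with hc
  have hg : Tendsto (fun n => ⟪x n, Wn n q - Wn n p⟫) atTop (𝓝 c) := by
    have : Tendsto (fun n => (⟪Wn n (x n - p), x n - p⟫ - ⟪Wn n (x n - q), x n - q⟫
        + ⟪Wn n q, q⟫ - ⟪Wn n p, p⟫) / 2) atTop (𝓝 c) := by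
      apply Tendsto.div_const
      exact ((hsqp.sub hsqq).add hWqq).sub hWpp
    exact this.congr (fun n => (hid n).symm)
  -- replace Wn by W using boundedness
  have herr : Tendsto (fun n => ⟪x n, (Wn n q - Wn n p) - (W q - W p)⟫) atTop (𝓝 0) := by
    have hlim : Tendsto (fun n => (Wn n q - Wn n p) - (W q - W p)) atTop (𝓝 0) := by
      have h := ((hWconv q).sub (hWconv p)).sub
        (tendsto_const_nhds (x := W q - W p) (f := atTop))
      simpa using h
    have hn : Tendsto (fun n => M * ‖(Wn n q - Wn n p) - (W q - W p)‖) atTop (𝓝 0) := by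
      have := (tendsto_const_nhds (x := M) (f := atTop)).mul
        (tendsto_norm_zero.comp hlim)
      simpa using this
    apply squeeze_zero_norm _ hn
    intro n
    calc ‖⟪x n, (Wn n q - Wn n p) - (W q - W p)⟫‖
        ≤ ‖x n‖ * ‖(Wn n q - Wn n p) - (W q - W p)‖ := by
          simpa using abs_real_inner_le_norm (x n) _
      _ ≤ M * ‖(Wn n q - Wn n p) - (W q - W p)‖ := by
          apply mul_le_mul_of_nonneg_right (hxbd n) (norm_nonneg _)
  have hh : Tendsto (fun n => ⟪x n, W q - W p⟫) atTop (𝓝 c) := by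
    have := hg.sub herr
    simp only [inner_sub_right] at this ⊢
    convert this using 2 with n
    · ring
    · ring
  -- subsequence limits
  obtain ⟨s, hs, hsp⟩ := hpw
  obtain ⟨t, ht, htq⟩ := hqw
  have h1 : ⟪p, W q - W p⟫ = c :=
    tendsto_nhds_unique (hsp (W q - W p)) (hh.comp hs.tendsto_atTop)
  have h2 : ⟪q, W q - W p⟫ = c :=
    tendsto_nhds_unique (htq (W q - W p)) (hh.comp ht.tendsto_atTop)
  have hkey : ⟪W (q - p), q - p⟫ = 0 := by
    have : ⟪q - p, W q - W p⟫ = 0 := by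
      simp only [inner_sub_left] at *; linarith
    rw [map_sub, real_inner_comm] at *
    linarith [real_inner_comm (q - p) (W q - W p)]
  have := hWcoer (q - p)
  rw [hkey] at this
  have hnorm : ‖q - p‖ = 0 := by
    by_contra h
    have hpos : 0 < ‖q - p‖ := lt_of_le_of_ne (norm_nonneg _) (Ne.symm h)
    nlinarith [mul_pos hα (pow_pos hpos 2)]
  have : q - p = 0 := norm_eq_zero.mp hnorm
  linear_combination (norm := abel) -this
end
end

section
/- Let K be a real Hilbert space, let α, β, μ, γ > 0, and let U be a bounded self-adjoint operator on K with ⟨Ux,x⟩ ≥ α‖x‖² for all x and ‖U‖ ≤ μ (so U is invertible and U^{-1} is self-adjoint positive). Let A be a monotone set-valued operator on K, let B : K → K be monotone and β-Lipschitz, and let x̄ ∈ K satisfy −B x̄ ∈ A x̄. Given x ∈ K, set ỹ = x − γ U(Bx), let p̃ ∈ K satisfy ỹ − p̃ ∈ γ U(A p̃), set q̃ = p̃ − γ U(B p̃) and x̃⁺ = x − ỹ + q̃. Then ‖x̃⁺ − x̄‖²_{U^{-1}} ≤ ‖x − x̄‖²_{U^{-1}} − μ^{-1}(1 − γ²β²μ²)‖x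 − p̃‖². -/
/-!
Write `s = p̃ - x̄`, `w = B x - B p̃` and `a = γ (B x + u)`, where `u ∈ A p̃` is the element with
`ỹ - p̃ = γ U u`. Then `x - x̄ = s + U a` and `x̃⁺ - x̄ = s + U (γ w)`, and in the metric of `U⁻¹`
the square of `s + U b` is `‖s‖²_{U⁻¹} + 2 ⟪s, b⟫ + ⟪U b, b⟫`. Comparing the two expansions, the
cross terms differ by `2 γ ⟪p̃ - x̄, u + B p̃⟫ ≥ 0` (monotonicity of `A` and `B` at the zero `x̄`
of `A + B`), the forward term is `⟪U (γ w), γ w⟫ ≤ μ γ² β² ‖x - p̃‖²`, and the backward term is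
`⟪U a, a⟫ ≥ μ⁻¹ ‖U a‖² = μ⁻¹ ‖x - p̃‖²`, since a positive operator satisfies `U ≥ U² / μ`.
-/

open Filter Topology
open scoped RealInnerProductSpace

noncomputable section

variable {E : Type*} [NormedAddCommGroup E] [InnerProductSpace ℝ E]

/-- A set-valued operator on a real Hilbert space, identified with its graph, is monotone. -/
def IsMonotoneOp (A : E → Set E) : Prop :=
  ∀ ⦃x u y v : E⦄, u ∈ A x → v ∈ A y → 0 ≤ ⟪x - y, u - v⟫

theorem IsMonotoneOp.inner_add_nonneg_of_neg_mem {A : E → Set E} (hA : IsMonotoneOp A)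
    {B : E → E} (hB : ∀ u w : E, 0 ≤ ⟪u - w, B u - B w⟫) {p z u : E} (hu : u ∈ A p)
    (hz : -B z ∈ A z) : 0 ≤ ⟪p - z, u + B p⟫ := by
  have hsplit : ⟪p - z, u + B p⟫ = ⟪p - z, u - -B z⟫ + ⟪p - z, B p - B z⟫ := by
    rw [← inner_add_right]
    congr 1
    abel
  rw [hsplit]
  exact add_nonneg (hA hu hz) (hB p z)

namespace ContinuousLinearMap

theorem real_inner_apply_self_le_of_opNorm_le {T : E →L[ℝ] E} {μ : ℝ} (hT : ‖T‖ ≤ μ) (x : E) :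
    ⟪T x, x⟫ ≤ μ * ‖x‖ ^ 2 :=
  calc ⟪T x, x⟫ ≤ ‖T x‖ * ‖x‖ := real_inner_le_norm _ _
    _ ≤ ‖T‖ * ‖x‖ * ‖x‖ := by gcongr; exact T.le_opNorm x
    _ ≤ μ * ‖x‖ ^ 2 := by rw [mul_assoc, ← sq]; gcongr

theorem IsPositive.norm_apply_sq_le_of_opNorm_le {T : E →L[ℝ] E} (hT : T.IsPositive) {μ : ℝ}
    (hμ : 0 < μ) (hTμ : ‖T‖ ≤ μ) (x : E) : ‖T x‖ ^ 2 ≤ μ * ⟪T x, x⟫ := by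
  -- expand `0 ≤ ⟪T (μ x - T x), μ x - T x⟫` and bound its term `⟪T (T x), T x⟫` by `μ ‖T x‖²`
  have hexpand : ⟪T (μ • x - T x), μ • x - T x⟫
      = μ ^ 2 * ⟪T x, x⟫ - 2 * μ * ‖T x‖ ^ 2 + ⟪T (T x), T x⟫ := by
    simp only [map_sub, map_smul, inner_sub_left, inner_sub_right, real_inner_smul_left,
      real_inner_smul_right, real_inner_self_eq_norm_sq]
    rw [hT.inner_left_eq_inner_right (T x) x, real_inner_self_eq_norm_sq]
    ring
  have hnonneg := hT.inner_nonneg_left (μ • x - T x)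
  have hsq := real_inner_apply_self_le_of_opNorm_le hTμ (T x)
  nlinarith

end ContinuousLinearMap

theorem real_inner_leftInverse_add_apply {U V : E →L[ℝ] E} (hU : U.IsSymmetric)
    (hVU : Function.LeftInverse V U) (hUV : Function.RightInverse V U) (s b : E) :
    ⟪V (s + U b), s + U b⟫ = ⟪V s, s⟫ + 2 * ⟪s, b⟫ + ⟪U b, b⟫ := by
  have hcross : ⟪V s, U b⟫ = ⟪s, b⟫ := by rw [← hU.apply_clm, hUV]
  rw [map_add, hVU, inner_add_left, inner_add_right, inner_add_right, hcross,
    real_inner_comm (U b), real_inner_comm s b]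
  ring

theorem fbf_one_step_fejer_estimate_general
    {K : Type*} [NormedAddCommGroup K] [InnerProductSpace ℝ K]
    (α β μ γ : ℝ) (hα : 0 < α) (hμ : 0 < μ) (hγ : 0 < γ)
    (U : K →L[ℝ] K)
    (hUsa : ∀ u w : K, ⟪U u, w⟫ = ⟪u, U w⟫)
    (hUcoer : ∀ u : K, α * ‖u‖ ^ 2 ≤ ⟪U u, u⟫)
    (hUnorm : ‖U‖ ≤ μ)
    -- `V = U⁻¹`
    (V : K →L[ℝ] K) (hVU : ∀ u : K, V (U u) = u) (hUV : ∀ u : K, U (V u) = u)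
    (A : K → Set K) (hA : IsMonotoneOp A)
    (B : K → K) (hBmono : ∀ u w : K, 0 ≤ ⟪u - w, B u - B w⟫)
    (hBlip : ∀ u w : K, ‖B u - B w‖ ≤ β * ‖u - w‖)
    (xbar : K) (hxbar : -B xbar ∈ A xbar)
    (x ytil ptil qtil xplus : K)
    (hy : ytil = x - γ • U (B x))
    (hp : ∃ u ∈ A ptil, ytil - ptil = γ • U u)
    (hq : qtil = ptil - γ • U (B ptil))
    (hxp : xplus = x - ytil + qtil) :
    ⟪V (xplus - xbar), xplus - xbar⟫ ≤
      ⟪V (x - xbar), x - xbar⟫ - μ⁻¹ * (1 - γ ^ 2 * β ^ 2 * μ ^ 2) * ‖x - ptil‖ ^ 2 := by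
  obtain ⟨u, hu, hyp⟩ := hp
  have hU : U.IsPositive :=
    U.isPositive_iff.2 ⟨hUsa, fun z => (by positivity : 0 ≤ α * ‖z‖ ^ 2).trans (hUcoer z)⟩
  set a := γ • (B x + u)
  set w := B x - B ptil
  have hd : x - ptil = U a := by
    rw [map_smul, map_add, smul_add, ← hyp, hy]; abel
  have hx : x - xbar = (ptil - xbar) + U a := by rw [← hd]; abel
  have hxplus : xplus - xbar = (ptil - xbar) + U (γ • w) := by
    rw [hxp, hy, hq, map_smul, map_sub, smul_sub]; abel
  have hcross : ⟪ptil - xbar, γ • w⟫ ≤ ⟪ptil - xbar, a⟫ := by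
    have hdiff : a - γ • w = γ • (u + B ptil) := by simp only [a, w, ← smul_sub]; congr 1; abel
    rw [← sub_nonneg, ← inner_sub_right, hdiff, real_inner_smul_right]
    exact mul_nonneg hγ.le (hA.inner_add_nonneg_of_neg_mem hBmono hu hxbar)
  have hforward : ⟪U (γ • w), γ • w⟫ ≤ μ * (γ ^ 2 * (β ^ 2 * ‖x - ptil‖ ^ 2)) := by
    have hw : ‖w‖ ^ 2 ≤ (β * ‖x - ptil‖) ^ 2 := pow_le_pow_left₀ (norm_nonneg _) (hBlip x ptil) 2
    calc ⟪U (γ • w), γ • w⟫ ≤ μ * ‖γ • w‖ ^ 2 :=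
          U.real_inner_apply_self_le_of_opNorm_le hUnorm _
      _ ≤ μ * (γ ^ 2 * (β ^ 2 * ‖x - ptil‖ ^ 2)) := by
          rw [norm_smul, mul_pow, Real.norm_eq_abs, sq_abs]; gcongr; rwa [← mul_pow]
  have hbackward : μ⁻¹ * ‖x - ptil‖ ^ 2 ≤ ⟪U a, a⟫ := by
    rw [inv_mul_le_iff₀ hμ, hd]
    exact hU.norm_apply_sq_le_of_opNorm_le hμ hUnorm a
  have hcoef : μ⁻¹ * (1 - γ ^ 2 * β ^ 2 * μ ^ 2) = μ⁻¹ - μ * (γ ^ 2 * β ^ 2) := by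
    field_simp
  rw [hxplus, hx, real_inner_leftInverse_add_apply hUsa hVU hUV,
    real_inner_leftInverse_add_apply hUsa hVU hUV, hcoef]
  linarith

/-- The one-step Fejér estimate for Tseng's forward-backward-forward
splitting in the metric `‖·‖_{U⁻¹}`: one has
`‖x̃⁺ − x̄‖²_{U⁻¹} ≤ ‖x − x̄‖²_{U⁻¹} − μ⁻¹ (1 − γ²β²μ²) ‖x − p̃‖²`. -/
theorem fbf_one_step_fejer_estimate
    {K : Type*} [NormedAddCommGroup K] [InnerProductSpace ℝ K]
    (α β μ γ : ℝ) (hα : 0 < α) (hβ : 0 < β) (hμ : 0 < μ) (hγ : 0 < γ)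
    (U : K →L[ℝ] K)
    (hUsa : ∀ u w : K, ⟪U u, w⟫ = ⟪u, U w⟫)
    (hUcoer : ∀ u : K, α * ‖u‖ ^ 2 ≤ ⟪U u, u⟫)
    (hUnorm : ‖U‖ ≤ μ)
    -- `V = U⁻¹`
    (V : K →L[ℝ] K) (hVU : ∀ u : K, V (U u) = u) (hUV : ∀ u : K, U (V u) = u)
    (A : K → Set K) (hA : IsMonotoneOp A)
    (B : K → K) (hBmono : ∀ u w : K, 0 ≤ ⟪u - w, B u - B w⟫)
    (hBlip : ∀ u w : K, ‖B u - B w‖ ≤ β * ‖u - w‖)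
    (xbar : K) (hxbar : -B xbar ∈ A xbar)
    (x ytil ptil qtil xplus : K)
    (hy : ytil = x - γ • U (B x))
    (hp : ∃ u ∈ A ptil, ytil - ptil = γ • U u)
    (hq : qtil = ptil - γ • U (B ptil))
    (hxp : xplus = x - ytil + qtil) :
    ⟪V (xplus - xbar), xplus - xbar⟫ ≤
      ⟪V (x - xbar), x - xbar⟫ - μ⁻¹ * (1 - γ ^ 2 * β ^ 2 * μ ^ 2) * ‖x - ptil‖ ^ 2 :=
  fbf_one_step_fejer_estimate_general α β μ γ hα hμ hγ U hUsa hUcoer hUnorm V hVU hUV A hA B hBmono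
    hBlip xbar hxbar x ytil ptil qtil xplus hy hp hq hxp
end
end

section
/- Let K be a real Hilbert space, let α, γ > 0, and let U be a bounded self-adjoint operator on K with ⟨Ux,x⟩ ≥ α‖x‖² for all x (so U is invertible). Let A be a monotone set-valued operator on K, let B : K → K be monotone, and let x̄ ∈ K satisfy −B x̄ ∈ A x̄. Given x ∈ K, set ỹ = x − γ U(Bx) and let p̃ ∈ K satisfy ỹ − p̃ ∈ γ U(A p̃). Then 2γ ⟨p̃ − x̄, Bx − B p̃⟩ ≤ ‖x − x̄‖²_{U^{-1}} − ‖p̃ − x̄‖²_{U^{-1}} − ‖x − p̃‖²_{U^{-1}}, where ‖z‖_{U^{-1}} = √⟨U^{-1}z, z⟩. -/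
open Filter Topology
open scoped RealInnerProductSpace

noncomputable section

variable {E : Type*} [NormedAddCommGroup E] [InnerProductSpace ℝ E]

/-- The combined monotonicity inequality in the metric `‖·‖_{U⁻¹}`:
`2γ ⟪p̃ − x̄, Bx − Bp̃⟫ ≤ ‖x − x̄‖²_{U⁻¹} − ‖p̃ − x̄‖²_{U⁻¹} − ‖x − p̃‖²_{U⁻¹}`. -/
theorem fbf_monotonicity_inequality
    {K : Type*} [NormedAddCommGroup K] [InnerProductSpace ℝ K]
    (α γ : ℝ) (hα : 0 < α) (hγ : 0 < γ)
    (U : K →L[ℝ] K)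
    (hUsa : ∀ u w : K, ⟪U u, w⟫ = ⟪u, U w⟫)
    (hUcoer : ∀ u : K, α * ‖u‖ ^ 2 ≤ ⟪U u, u⟫)
    -- `V = U⁻¹`
    (V : K →L[ℝ] K) (hVU : ∀ u : K, V (U u) = u) (hUV : ∀ u : K, U (V u) = u)
    (A : K → Set K) (hA : IsMonotoneOp A)
    (B : K → K) (hBmono : ∀ u w : K, 0 ≤ ⟪u - w, B u - B w⟫)
    (xbar : K) (hxbar : -B xbar ∈ A xbar)
    (x ytil ptil : K)
    (hy : ytil = x - γ • U (B x))
    (hp : ∃ u ∈ A ptil, ytil - ptil = γ • U u) :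
    2 * γ * ⟪ptil - xbar, B x - B ptil⟫ ≤
      ⟪V (x - xbar), x - xbar⟫ - ⟪V (ptil - xbar), ptil - xbar⟫ -
        ⟪V (x - ptil), x - ptil⟫ := by
  obtain ⟨u, huA, hu⟩ := hp
  have hVsa : ∀ a b : K, ⟪V a, b⟫ = ⟪a, V b⟫ := by
    intro a b
    calc ⟪V a, b⟫ = ⟪V a, U (V b)⟫ := by rw [hUV]
      _ = ⟪U (V a), V b⟫ := (hUsa _ _).symm
      _ = ⟪a, V b⟫ := by rw [hUV]
  have h1 : x - ptil = γ • U u + γ • U (B x) := by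
    rw [hy] at hu
    linear_combination (norm := module) hu
  have hVc : V (x - ptil) = γ • u + γ • B x := by
    rw [h1, map_add, map_smul, map_smul, hVU, hVU]
  have hid : ⟪V (x - xbar), x - xbar⟫ - ⟪V (ptil - xbar), ptil - xbar⟫ -
      ⟪V (x - ptil), x - ptil⟫ = 2 * ⟪ptil - xbar, V (x - ptil)⟫ := by
    have hx : x - xbar = (ptil - xbar) + (x - ptil) := by abel
    rw [hx, map_add, inner_add_left, inner_add_right, inner_add_right]
    have e1 : ⟪V (ptil - xbar), x - ptil⟫ = ⟪ptil - xbar, V (x - ptil)⟫ := hVsa _ _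
    have e2 : ⟪V (x - ptil), ptil - xbar⟫ = ⟪ptil - xbar, V (x - ptil)⟫ :=
      real_inner_comm _ _
    linarith
  have hmA : 0 ≤ ⟪ptil - xbar, u - -B xbar⟫ := hA huA hxbar
  have hmB : 0 ≤ ⟪ptil - xbar, B ptil - B xbar⟫ := hBmono ptil xbar
  rw [hid, hVc]
  simp only [inner_add_right, inner_sub_right, inner_neg_right, real_inner_smul_right,
    sub_neg_eq_add] at *
  nlinarith [mul_nonneg hγ.le hmA, mul_nonneg hγ.le hmB]
end
end
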